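/- With the Sabra shell-model nonlinearity B as above, for every u in the weighted ℓ² space H = E_0 and every v ∈ E_{1/2}, the real part of the pairing ⟨B(u,v), v⟩ = Σ_n b_n(u,v)·conj(v_n) vanishes: Re⟨B(u,v), v⟩ = 0. -/

import Mathlib

open scoped ComplexConjugate

/-- The dyadic wavenumbers `λ_n = k₀ 2^n` of the shell models. -/
noncomputable def shellLam (k0 : ℝ) (n : ℕ) : ℝ := k0 * 2 ^ n

/-- The Sabra shell-model nonlinearity `b_n(u,v)`, with the convention that the
coordinates of index `≤ 0` vanish. -/
noncomputable def sabraB (k0 : ℝ) (u v : ℕ → ℂ) (n : ℕ) : ℂ :=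
  (Complex.I / 3) * (shellLam k0 (n + 1)) *
      (conj (v (n + 1)) * u (n + 2) + 2 * conj (u (n + 1)) * v (n + 2))
    + (Complex.I / 3) * (shellLam k0 n) *
      (conj (u (n - 1)) * v (n + 1) - conj (v (n - 1)) * u (n + 1))
    + (Complex.I / 3) * (shellLam k0 (n - 1)) *
      (2 * u (n - 1) * v (n - 2) + u (n - 2) * v (n - 1))

/-!
Writing `Π_n` for the energy flux through the `n`-th shell, the real part of each term
`b_n(u,v) conj(v_n)` is the difference `Re Π_{n-1} - Re Π_n`, so the series telescopes.
Its partial sums are `Re Π_0 - Re Π_N`, and `Π_0 = 0` by the boundary convention, while every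
term of `Π_N` is a product of a coordinate of `u`, a coordinate of `v` and one of `λ v`, all of
which tend to zero for `u ∈ E_0`, `v ∈ E_{1/2}`.
-/

open Filter Topology

theorem HasSum.eq_sub_of_telescoping {G : Type*} [AddCommGroup G] [TopologicalSpace G]
    [IsTopologicalAddGroup G] [T2Space G] {f ψ : ℕ → G} {a l : G} (hf : HasSum f a)
    (hfψ : ∀ n, f n = ψ n - ψ (n + 1)) (hψ : Tendsto ψ atTop (𝓝 l)) : a = ψ 0 - l := by
  refine tendsto_nhds_unique hf.tendsto_sum_nat ?_
  simp_rw [hfψ, Finset.sum_range_sub']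
  exact tendsto_const_nhds.sub hψ

theorem tendsto_zero_of_summable_norm_sq {E : Type*} [SeminormedAddCommGroup E] {u : ℕ → E}
    (hu : Summable fun n => ‖u n‖ ^ 2) : Tendsto u atTop (𝓝 0) := by
  rw [tendsto_zero_iff_norm_tendsto_zero]
  simpa [Real.sqrt_sq (norm_nonneg _)] using hu.tendsto_atTop_zero.sqrt

theorem shellLam_pos {k0 : ℝ} (hk0 : 0 < k0) (n : ℕ) : 0 < shellLam k0 n := by
  unfold shellLam; positivity

theorem tendsto_shellLam_atTop {k0 : ℝ} (hk0 : 0 < k0) : Tendsto (shellLam k0) atTop atTop :=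
  (tendsto_pow_atTop_atTop_of_one_lt one_lt_two).const_mul_atTop hk0

theorem tendsto_zero_of_tendsto_shellLam_mul {k0 : ℝ} (hk0 : 0 < k0) {v : ℕ → ℂ}
    (hv : Tendsto (fun n => (shellLam k0 n : ℂ) * v n) atTop (𝓝 0)) :
    Tendsto v atTop (𝓝 0) := by
  have hinv : Tendsto (fun n => ((shellLam k0 n)⁻¹ : ℂ)) atTop (𝓝 0) := by
    simpa [Function.comp_def] using (Complex.continuous_ofReal.tendsto 0).comp
      (tendsto_inv_atTop_zero.comp (tendsto_shellLam_atTop hk0))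
  have := hinv.mul hv
  rw [zero_mul] at this
  refine this.congr fun n => ?_
  simpa using inv_mul_cancel_left₀ (Complex.ofReal_ne_zero.2 (shellLam_pos hk0 n).ne') (v n)

/-- The energy flux `Π_n` through the `n`-th shell. -/
noncomputable def sabraFlux (k0 : ℝ) (u v : ℕ → ℂ) (n : ℕ) : ℂ :=
  (Complex.I / 3) * (u (n - 1) * (shellLam k0 n * v n) * conj (v (n + 1))
    + (u n * v (n - 1) - conj (v n) * u (n + 2)) * conj (shellLam k0 (n + 1) * v (n + 1))
    + u (n + 1) * v n * conj (shellLam k0 (n + 2) * v (n + 2)))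

theorem sabraFlux_zero (k0 : ℝ) {u v : ℕ → ℂ} (hu0 : u 0 = 0) (hv0 : v 0 = 0) :
    sabraFlux k0 u v 0 = 0 := by
  simp [sabraFlux, hu0, hv0]

theorem re_sabraB_mul_conj {k0 : ℝ} {u v : ℕ → ℂ} (hu0 : u 0 = 0) (hv0 : v 0 = 0) (n : ℕ) :
    (sabraB k0 u v (n + 1) * conj (v (n + 1))).re
      = (sabraFlux k0 u v n).re - (sabraFlux k0 u v (n + 1)).re := by
  have htelescope : sabraB k0 u v (n + 1) * conj (v (n + 1))
        + conj (sabraB k0 u v (n + 1) * conj (v (n + 1)))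
      = sabraFlux k0 u v n + conj (sabraFlux k0 u v n)
        - (sabraFlux k0 u v (n + 1) + conj (sabraFlux k0 u v (n + 1))) := by
    -- at `n = 0` the truncated `0 - 1 = 0` brings in `u 0` and `v 0`
    rcases n with _ | n <;>
    · simp only [sabraB, sabraFlux, shellLam, pow_succ, zero_add, zero_tsub,
        add_tsub_cancel_right, hu0, hv0, map_add, map_mul, map_sub, map_div₀, map_ofNat,
        map_zero, Complex.conj_conj, Complex.conj_I, Complex.conj_ofReal]
      push_cast
      ring
  have := congrArg Complex.re htelescope
  simp only [Complex.add_re, Complex.sub_re, Complex.conj_re] at this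
  linarith

theorem tendsto_sabraFlux_zero {k0 : ℝ} {u v : ℕ → ℂ} (hu : Tendsto u atTop (𝓝 0))
    (hv : Tendsto v atTop (𝓝 0))
    (hlv : Tendsto (fun n => (shellLam k0 n : ℂ) * v n) atTop (𝓝 0)) :
    Tendsto (sabraFlux k0 u v) atTop (𝓝 0) := by
  have hconj {w : ℕ → ℂ} (hw : Tendsto w atTop (𝓝 0)) :
      Tendsto (fun n => conj (w n)) atTop (𝓝 0) := by
    simpa [Function.comp_def] using (Complex.continuous_conj.tendsto 0).comp hw
  have shift {w : ℕ → ℂ} (hw : Tendsto w atTop (𝓝 0)) (k : ℕ) :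
      Tendsto (fun n => w (n + k)) atTop (𝓝 0) :=
    hw.comp (tendsto_add_atTop_nat k)
  have hu' := hu.comp (tendsto_sub_atTop_nat 1)
  have hv' := hv.comp (tendsto_sub_atTop_nat 1)
  have h := (((hu'.mul hlv).mul (hconj (shift hv 1))).add
    (((hu.mul hv').sub ((hconj hv).mul (shift hu 2))).mul (hconj (shift hlv 1)))).add
    (((shift hu 1).mul hv).mul (hconj (shift hlv 2)))
  unfold sabraFlux
  simpa using h.const_mul (Complex.I / 3)

/-- Energy conservation of the Sabra shell model: for `u ∈ H = E_0` and `v ∈ E_{1/2}`,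
`Re⟨B(u,v), v⟩ = Re ∑_{n ≥ 1} b_n(u,v) conj(v_n) = 0`. -/
theorem stmt4 (k0 : ℝ) (hk0 : 0 < k0) (u v : ℕ → ℂ) (hu0 : u 0 = 0) (hv0 : v 0 = 0)
    (hu : Summable (fun n : ℕ => ‖u n‖ ^ 2))
    (hv : Summable (fun n : ℕ => (shellLam k0 n) ^ 2 * ‖v n‖ ^ 2))
    (hpair : Summable (fun n : ℕ => sabraB k0 u v (n + 1) * conj (v (n + 1)))) :
    (∑' n : ℕ, sabraB k0 u v (n + 1) * conj (v (n + 1))).re = 0 := by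
  have hlv : Tendsto (fun n => (shellLam k0 n : ℂ) * v n) atTop (𝓝 0) :=
    tendsto_zero_of_summable_norm_sq (by simpa [norm_mul, mul_pow] using hv)
  have hflux := tendsto_sabraFlux_zero (tendsto_zero_of_summable_norm_sq hu)
    (tendsto_zero_of_tendsto_shellLam_mul hk0 hlv) hlv
  have := (Complex.hasSum_re hpair.hasSum).eq_sub_of_telescoping
    (ψ := fun n => (sabraFlux k0 u v n).re) (re_sabraB_mul_conj hu0 hv0)
    ((Complex.continuous_re.tendsto 0).comp hflux)
  simpa [sabraFlux_zero k0 hu0 hv0] using this
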